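/- Let d ≥ 1, τ ∈ [0,1], f, g ∈ 𝒮(ℝ^d), and 1 ≤ j ≤ d. Then for all (x,ξ) ∈ ℝ^{2d}: W_τ(x_j f, g)(x,ξ) = x_j · W_τ(f,g)(x,ξ) + (iτ/(2π)) ∂_{ξ_j} W_τ(f,g)(x,ξ), where x_j f denotes the function t ↦ t_j f(t). Equivalently, with D = −i∂, W_τ(x_j f, g) = (x_j − (τ/(2π)) D_{ξ_j}) W_τ(f,g). -/

import Mathlib

open MeasureTheory Complex Real ComplexConjugate
open scoped RealInnerProductSpace ENNReal NNReal

noncomputable section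

abbrev Ed (d : ℕ) := EuclideanSpace ℝ (Fin d)

/-- cross-τ-Wigner distribution. -/
def Wtau {d : ℕ} (τ : ℝ) (f g : Ed d → ℂ) (x ξ : Ed d) : ℂ :=
  ∫ t : Ed d, Complex.exp (-(2 * π * Complex.I) * (⟪t, ξ⟫ : ℝ)) * f (x + τ • t) *
    conj (g (x - (1 - τ) • t))

lemma aff_temperate {d : ℕ} (c : ℝ) (x : Ed d) :
    Function.HasTemperateGrowth (fun t : Ed d => x + c • t) := by
  have hfd : (fderiv ℝ (fun t : Ed d => x + c • t)) =
      fun _ => c • ContinuousLinearMap.id ℝ (Ed d) := by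
    funext t
    rw [show (fun t : Ed d => x + c • t) = fun t => x + (c • ContinuousLinearMap.id ℝ (Ed d)) t
      from rfl, fderiv_const_add, ContinuousLinearMap.fderiv]
  refine Function.HasTemperateGrowth.of_fderiv (k := 1) (C := ‖x‖ + |c|) ?_ ?_ ?_
  · rw [hfd]; exact .const _
  · exact (differentiable_id.const_smul c).const_add x
  · intro t
    have h1 : ‖x + c • t‖ ≤ ‖x‖ + |c| * ‖t‖ := by
      refine (norm_add_le _ _).trans ?_
      rw [norm_smul, Real.norm_eq_abs]
    have h2 : (0:ℝ) ≤ ‖t‖ := norm_nonneg t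
    have h3 : (0:ℝ) ≤ ‖x‖ := norm_nonneg x
    have h4 : (0:ℝ) ≤ |c| := abs_nonneg c
    nlinarith

lemma aff_integrable {d : ℕ} (c : ℝ) (hc : c ≠ 0) (x : Ed d)
    (f : SchwartzMap (Ed d) ℂ) (k : ℕ) :
    Integrable (fun t : Ed d => ‖t‖ ^ k * ‖f (x + c • t)‖) := by
  have hup : ∃ (n : ℕ) (C : ℝ), ∀ t : Ed d, ‖t‖ ≤ C * (1 + ‖x + c • t‖) ^ n := by
    refine ⟨1, (‖x‖ + 1) / |c|, fun t => ?_⟩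
    have hc' : (0:ℝ) < |c| := abs_pos.2 hc
    have h1 : |c| * ‖t‖ = ‖(x + c • t) - x‖ := by
      rw [add_sub_cancel_left, norm_smul, Real.norm_eq_abs]
    have h2 : ‖(x + c • t) - x‖ ≤ ‖x + c • t‖ + ‖x‖ := norm_sub_le _ _
    rw [div_mul_eq_mul_div, le_div_iff₀ hc', pow_one]
    have h3 : (0:ℝ) ≤ ‖x‖ := norm_nonneg x
    have h4 : (0:ℝ) ≤ ‖x + c • t‖ := norm_nonneg _
    nlinarith [h1 ▸ h2]
  have h := (SchwartzMap.compCLM (𝕜 := ℝ) (aff_temperate c x) hup f).integrable_pow_mul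
    (volume : Measure (Ed d)) k
  simpa using h

lemma schwartz_bdd {d : ℕ} (f : SchwartzMap (Ed d) ℂ) : ∃ C, 0 ≤ C ∧ ∀ y, ‖f y‖ ≤ C := by
  obtain ⟨C, hC⟩ := f.decay 0 0
  refine ⟨C, (norm_nonneg (f 0)).trans (by simpa using hC.2 0), fun y => by simpa using hC.2 y⟩

lemma key_integrable {d : ℕ} (τ : ℝ) (hτ : τ ∈ Set.Icc (0:ℝ) 1) (x : Ed d)
    (f g : SchwartzMap (Ed d) ℂ) (k : ℕ) :
    Integrable (fun t : Ed d =>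
      ‖t‖ ^ k * (‖f (x + τ • t)‖ * ‖g (x - (1 - τ) • t)‖)) := by
  have hcont : Continuous (fun t : Ed d =>
      ‖t‖ ^ k * (‖f (x + τ • t)‖ * ‖g (x - (1 - τ) • t)‖)) := by
    apply Continuous.mul (by fun_prop)
    exact ((f.continuous.comp (by fun_prop)).norm.mul
      ((g.continuous.comp (by fun_prop)).norm))
  rcases eq_or_ne τ 0 with rfl | h0
  · obtain ⟨C, hC0, hC⟩ := schwartz_bdd f
    have hint := (aff_integrable (-1 : ℝ) (by norm_num) x g k).const_mul C
    refine hint.mono' hcont.aestronglyMeasurable (Filter.Eventually.of_forall fun t => ?_)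
    have he : x - (1 - 0 : ℝ) • t = x + (-1 : ℝ) • t := by
      simp [sub_eq_add_neg]
    rw [Real.norm_eq_abs, _root_.abs_of_nonneg (by positivity), he]
    have hb := hC (x + (0:ℝ) • t)
    have h2 : (0:ℝ) ≤ ‖t‖ ^ k := by positivity
    have h3 : (0:ℝ) ≤ ‖g (x + (-1:ℝ) • t)‖ := norm_nonneg _
    calc ‖t‖ ^ k * (‖f (x + (0:ℝ) • t)‖ * ‖g (x + (-1:ℝ) • t)‖)
        = (‖t‖ ^ k * ‖g (x + (-1:ℝ) • t)‖) * ‖f (x + (0:ℝ) • t)‖ := by ring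
      _ ≤ (‖t‖ ^ k * ‖g (x + (-1:ℝ) • t)‖) * C :=
          mul_le_mul_of_nonneg_left hb (mul_nonneg h2 h3)
      _ = C * (‖t‖ ^ k * ‖g (x + (-1:ℝ) • t)‖) := by ring
  · obtain ⟨C, hC0, hC⟩ := schwartz_bdd g
    have hint := (aff_integrable τ h0 x f k).const_mul C
    refine hint.mono' hcont.aestronglyMeasurable (Filter.Eventually.of_forall fun t => ?_)
    rw [Real.norm_eq_abs, _root_.abs_of_nonneg (by positivity)]
    have hb := hC (x - (1 - τ) • t)
    have h2 : (0:ℝ) ≤ ‖t‖ ^ k := by positivity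
    have h3 : (0:ℝ) ≤ ‖f (x + τ • t)‖ := norm_nonneg _
    calc ‖t‖ ^ k * (‖f (x + τ • t)‖ * ‖g (x - (1 - τ) • t)‖)
        = (‖t‖ ^ k * ‖f (x + τ • t)‖) * ‖g (x - (1 - τ) • t)‖ := by ring
      _ ≤ (‖t‖ ^ k * ‖f (x + τ • t)‖) * C :=
          mul_le_mul_of_nonneg_left hb (mul_nonneg h2 h3)
      _ = C * (‖t‖ ^ k * ‖f (x + τ • t)‖) := by ring

set_option maxHeartbeats 2000000 in
/-- `W_τ(x_j f, g) = x_j W_τ(f,g) + (iτ/(2π)) ∂_{ξ_j} W_τ(f,g)`. -/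
theorem stmt11 (d : ℕ) (hd : 1 ≤ d) (τ : ℝ) (hτ : τ ∈ Set.Icc (0:ℝ) 1)
    (f g : SchwartzMap (Ed d) ℂ) (j : Fin d) (x ξ : Ed d) :
    Wtau τ (fun t => (t j : ℂ) * f t) (⇑g) x ξ =
      (x j : ℂ) * Wtau τ (⇑f) (⇑g) x ξ +
        (Complex.I * τ / (2 * π)) *
          fderiv ℝ (fun ξ' => Wtau τ (⇑f) (⇑g) x ξ') ξ (EuclideanSpace.single j 1) := by
  classical
  set F : Ed d → Ed d → ℂ := fun ξ' t =>
    Complex.exp (-(2 * π * Complex.I) * (⟪t, ξ'⟫ : ℝ)) * f (x + τ • t) *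
      conj (g (x - (1 - τ) • t)) with hF
  set F' : Ed d → Ed d → (Ed d →L[ℝ] ℂ) := fun ξ' t =>
    (-(2 * π * Complex.I) * F ξ' t) • (Complex.ofRealCLM.comp (innerSL ℝ t)) with hF'
  have hexp : ∀ (r : ℝ), ‖Complex.exp (-(2 * π * Complex.I) * (r : ℂ))‖ = 1 := by
    intro r
    rw [Complex.norm_exp]
    norm_num [Complex.mul_re]
  have hFnorm : ∀ ξ' t, ‖F ξ' t‖ = ‖f (x + τ • t)‖ * ‖g (x - (1 - τ) • t)‖ := by
    intro ξ' t
    simp only [hF, norm_mul, hexp, one_mul, RCLike.norm_conj]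
  have hcontF : ∀ ξ' : Ed d, Continuous (fun t => F ξ' t) := by
    intro ξ'
    refine Continuous.mul (Continuous.mul ?_ (f.continuous.comp (by fun_prop))) ?_
    · exact Complex.continuous_exp.comp (continuous_const.mul
        (Complex.continuous_ofReal.comp ((continuous_id.inner continuous_const))))
    · exact Complex.continuous_conj.comp (g.continuous.comp (by fun_prop))
  have hFint : ∀ ξ' : Ed d, Integrable (F ξ') := by
    intro ξ'
    refine (key_integrable τ hτ x f g 0).mono' (hcontF ξ').aestronglyMeasurable
      (Filter.Eventually.of_forall fun t => ?_)
    rw [hFnorm]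
    simp
  have htle : ∀ t : Ed d, |t j| ≤ ‖t‖ := by
    intro t
    have h := abs_real_inner_le_norm t (EuclideanSpace.single j (1:ℝ))
    simpa [EuclideanSpace.inner_single_right] using h
  have htj : Integrable (fun t : Ed d => (t j : ℂ) * F ξ t) := by
    refine (key_integrable τ hτ x f g 1).mono'
      ((Complex.continuous_ofReal.comp (by fun_prop)).mul (hcontF ξ)).aestronglyMeasurable
      (Filter.Eventually.of_forall fun t => ?_)
    rw [norm_mul, hFnorm, Complex.norm_real, Real.norm_eq_abs, pow_one]
    exact mul_le_mul_of_nonneg_right (htle t) (by positivity)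
  have hcontF' : Continuous (fun t => F' ξ t) := by
    have h1 : Continuous fun t : Ed d => Complex.ofRealCLM.comp (innerSL ℝ t) :=
      (ContinuousLinearMap.compL ℝ (Ed d) ℝ ℂ Complex.ofRealCLM).continuous.comp
        (innerSL ℝ).continuous
    exact (continuous_const.mul (hcontF ξ)).smul h1
  have hLnorm : ∀ t : Ed d, ‖Complex.ofRealCLM.comp (innerSL ℝ t)‖ ≤ ‖t‖ := by
    intro t
    refine ContinuousLinearMap.opNorm_le_bound _ (norm_nonneg t) fun v => ?_
    simp only [ContinuousLinearMap.comp_apply, Complex.ofRealCLM_apply, innerSL_apply_apply,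
      Complex.norm_real]
    exact norm_inner_le_norm (𝕜 := ℝ) t v
  have hcn : ‖-(2 * (π : ℂ) * Complex.I)‖ = 2 * π := by
    rw [norm_neg]
    simp [_root_.abs_of_nonneg Real.pi_nonneg]
  have hbound : ∀ t : Ed d, ∀ ξ' ∈ Metric.ball ξ 1, ‖F' ξ' t‖ ≤
      (2 * π) * (‖t‖ ^ 1 * (‖f (x + τ • t)‖ * ‖g (x - (1 - τ) • t)‖)) := by
    intro t ξ' _
    show ‖(-(2 * π * Complex.I) * F ξ' t) • (Complex.ofRealCLM.comp (innerSL ℝ t))‖ ≤ _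
    calc ‖(-(2 * π * Complex.I) * F ξ' t) • (Complex.ofRealCLM.comp (innerSL ℝ t))‖
        ≤ ‖-(2 * π * Complex.I) * F ξ' t‖ * ‖Complex.ofRealCLM.comp (innerSL ℝ t)‖ := by
          refine ContinuousLinearMap.opNorm_le_bound _ (mul_nonneg (norm_nonneg _) (norm_nonneg _)) fun v => ?_
          simp only [ContinuousLinearMap.smul_apply, smul_eq_mul]
          calc ‖(-(2 * π * Complex.I) * F ξ' t) * (Complex.ofRealCLM.comp (innerSL ℝ t)) v‖
              = ‖-(2 * π * Complex.I) * F ξ' t‖ *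
                ‖(Complex.ofRealCLM.comp (innerSL ℝ t)) v‖ := norm_mul _ _
            _ ≤ ‖-(2 * π * Complex.I) * F ξ' t‖ *
                (‖Complex.ofRealCLM.comp (innerSL ℝ t)‖ * ‖v‖) :=
                mul_le_mul_of_nonneg_left ((Complex.ofRealCLM.comp (innerSL ℝ t)).le_opNorm v)
                  (norm_nonneg _)
            _ = ‖-(2 * π * Complex.I) * F ξ' t‖ *
                ‖Complex.ofRealCLM.comp (innerSL ℝ t)‖ * ‖v‖ := by ring
      _ = 2 * π * (‖f (x + τ • t)‖ * ‖g (x - (1 - τ) • t)‖) *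
          ‖Complex.ofRealCLM.comp (innerSL ℝ t)‖ := by rw [norm_mul, hcn, hFnorm]
      _ ≤ 2 * π * (‖f (x + τ • t)‖ * ‖g (x - (1 - τ) • t)‖) * ‖t‖ := by
          refine mul_le_mul_of_nonneg_left (hLnorm t) ?_
          positivity
      _ = (2 * π) * (‖t‖ ^ 1 * (‖f (x + τ • t)‖ * ‖g (x - (1 - τ) • t)‖)) := by ring
  have hF'int : Integrable (fun t => F' ξ t) := by
    refine ((key_integrable τ hτ x f g 1).const_mul (2 * π)).mono'
      hcontF'.aestronglyMeasurable (Filter.Eventually.of_forall fun t => ?_)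
    exact hbound t ξ (Metric.mem_ball_self one_pos)
  have hdiff : ∀ t : Ed d, ∀ ξ' ∈ Metric.ball ξ 1,
      HasFDerivAt (fun y => F y t) (F' ξ' t) ξ' := by
    intro t ξ' _
    have h1 : HasFDerivAt (fun y : Ed d => ((⟪t, y⟫ : ℝ) : ℂ))
        (Complex.ofRealCLM.comp (innerSL ℝ t)) ξ' :=
      Complex.ofRealCLM.hasFDerivAt.comp ξ' (innerSL ℝ t).hasFDerivAt
    have h2 := ((h1.const_mul (-(2 * π * Complex.I))).cexp.mul_const
        (f (x + τ • t))).mul_const (conj (g (x - (1 - τ) • t)))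
    refine h2.congr_fderiv ?_
    ext v
    simp only [hF', hF, ContinuousLinearMap.smul_apply, ContinuousLinearMap.comp_apply,
      Complex.ofRealCLM_apply, innerSL_apply_apply, smul_eq_mul]
    ring
  have hMain : HasFDerivAt (fun ξ' => ∫ t, F ξ' t) (∫ t, F' ξ t) ξ :=
    hasFDerivAt_integral_of_dominated_of_fderiv_le (Metric.ball_mem_nhds ξ one_pos)
      (Filter.Eventually.of_forall fun ξ' => (hcontF ξ').aestronglyMeasurable)
      (hFint ξ) hcontF'.aestronglyMeasurable
      (Filter.Eventually.of_forall fun t => hbound t)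
      ((key_integrable τ hτ x f g 1).const_mul (2 * π))
      (Filter.Eventually.of_forall fun t => hdiff t)
  have hWeq : (fun ξ' => Wtau τ (⇑f) (⇑g) x ξ') = fun ξ' => ∫ t, F ξ' t := rfl
  have hfd : fderiv ℝ (fun ξ' => Wtau τ (⇑f) (⇑g) x ξ') ξ (EuclideanSpace.single j 1)
      = ∫ t, F' ξ t (EuclideanSpace.single j 1) := by
    rw [hWeq, hMain.fderiv, ContinuousLinearMap.integral_apply hF'int]
  have happ : ∀ t : Ed d, F' ξ t (EuclideanSpace.single j 1) =
      -(2 * π * Complex.I) * ((t j : ℂ) * F ξ t) := by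
    intro t
    simp only [hF', ContinuousLinearMap.smul_apply, ContinuousLinearMap.comp_apply,
      Complex.ofRealCLM_apply, innerSL_apply_apply, smul_eq_mul]
    rw [EuclideanSpace.inner_single_right]
    simp only [conj_trivial]
    push_cast
    ring
  have hπ : ((π : ℂ)) ≠ 0 := Complex.ofReal_ne_zero.mpr Real.pi_ne_zero
  have hLHS : Wtau τ (fun t => (t j : ℂ) * f t) (⇑g) x ξ
      = ∫ t, ((x j : ℂ) + (τ : ℂ) * (t j : ℂ)) * F ξ t := by
    rw [Wtau]
    refine integral_congr_ae (Filter.Eventually.of_forall fun t => ?_)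
    have hco : (x + τ • t) j = x j + τ * t j := rfl
    simp only [hF]
    rw [hco]
    push_cast
    ring
  rw [hLHS, hfd]
  have h1 : ∫ t, F' ξ t (EuclideanSpace.single j 1)
      = -(2 * π * Complex.I) * ∫ t, (t j : ℂ) * F ξ t := by
    rw [← integral_const_mul]
    exact integral_congr_ae (Filter.Eventually.of_forall happ)
  rw [h1, show Wtau τ (⇑f) (⇑g) x ξ = ∫ t, F ξ t from rfl]
  have hcoef : Complex.I * τ / (2 * π) * -(2 * π * Complex.I) = (τ : ℂ) := by
    field_simp
    ring_nf
    rw [Complex.I_sq]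
    ring
  rw [← mul_assoc, hcoef, ← integral_const_mul ((x j : ℂ)), ← integral_const_mul ((τ : ℂ)),
    ← integral_add (hFint ξ |>.const_mul _) (htj.const_mul _)]
  refine integral_congr_ae (Filter.Eventually.of_forall fun t => ?_)
  ring
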